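/- A binary word w avoiding factors 000 and 111 avoids the pattern xx^Rx if and only if its associated sequence f(w) belongs to X, i.e., contains no index j with n_{j-1} ≥ n_j and n_j ≤ n_{j+1}. -/

import Mathlib

/-- A binary word avoids the pattern `x xᴿ x`: no factor `u ++ u.reverse ++ u` with `u` nonempty. -/
def AvoidsP (w : List Bool) : Prop :=
  ¬ ∃ u : List Bool, u ≠ [] ∧ (u ++ u.reverse ++ u) <:+: w

/-- A binary word avoids the factors `000` and `111`. -/
def AvoidsCubes (w : List Bool) : Prop :=
  ¬ ([false, false, false] <:+: w) ∧ ¬ ([true, true, true] <:+: w)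

/-- Alternating word: a prefix of `0101…` or `1010…`. -/
def Alt (A : List Bool) : Prop := A.Chain' (· ≠ ·)

/-- Glue the blocks `A_0 a_1 a_1 A_1 a_2 a_2 ⋯ a_k a_k A_k`. -/
def glue : List (List Bool) → List Bool → List Bool
  | [], _ => []
  | [A], _ => A
  | A :: As, [] => A ++ glue As []
  | A :: As, b :: bs => A ++ [b, b] ++ glue As bs

/-- `IsFact As bs w` : `w = A_0 b_1 b_1 A_1 ⋯ b_k b_k A_k` with all `A_i` alternating. -/
def IsFact (As : List (List Bool)) (bs : List Bool) (w : List Bool) : Prop :=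
  As.length = bs.length + 1 ∧ (∀ A ∈ As, Alt A) ∧ w = glue As bs

/-- Middle and final entries of the associated sequence: `n_i = |a_i A_i a_{i+1}|`, `n_k = |a_k A_k|`. -/
def seqMid : List (List Bool) → List ℕ
  | [] => []
  | [A] => [A.length + 1]
  | A :: As => (A.length + 2) :: seqMid As

/-- The sequence `f(w) = (n_0, …, n_k)` associated to the canonical factorization. -/
def seqOf : List (List Bool) → List ℕ
  | [] => []
  | [A] => if A.isEmpty then [] else [A.length]
  | A :: As => (A.length + 1) :: seqMid As

/-- No index `j` with `d_{j-1} ≥ d_j` and `d_j ≤ d_{j+1}`. -/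
def NoValley (d : List ℕ) : Prop :=
  ∀ j : ℕ, 1 ≤ j → j + 1 < d.length →
    ¬ (d.getD (j - 1) 0 ≥ d.getD j 0 ∧ d.getD j 0 ≤ d.getD (j + 1) 0)

/-- Membership in the set `X` of sequences. -/
def InX (d : List ℕ) : Prop := (∀ x ∈ d, 0 < x) ∧ NoValley d

/-- Type 1 (strongly unimodal): strictly increasing to a unique maximum, then strictly decreasing. -/
def Type1 (d : List ℕ) : Prop :=
  (∀ x ∈ d, 0 < x) ∧ d ≠ [] ∧ ∃ j < d.length,
    (∀ i : ℕ, i + 1 ≤ j → d.getD i 0 < d.getD (i + 1) 0) ∧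
    (∀ i : ℕ, j ≤ i → i + 1 < d.length → d.getD i 0 > d.getD (i + 1) 0)

/-- Type 2: strictly increasing, two equal consecutive maximal terms, then strictly decreasing. -/
def Type2 (d : List ℕ) : Prop :=
  (∀ x ∈ d, 0 < x) ∧ ∃ j, 1 ≤ j ∧ j < d.length ∧
    d.getD (j - 1) 0 = d.getD j 0 ∧
    (∀ i : ℕ, i + 1 ≤ j - 1 → d.getD i 0 < d.getD (i + 1) 0) ∧
    (∀ i : ℕ, j ≤ i → i + 1 < d.length → d.getD i 0 > d.getD (i + 1) 0)

/-- `v n` : number of sequences in `X` of weight `n`. -/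
noncomputable def v (n : ℕ) : ℕ := Nat.card {d : List ℕ // InX d ∧ d.sum = n}

/-- A strict partition, viewed as a finite set of positive integers. -/
def StrictPartition (s : Finset ℕ) : Prop := 0 ∉ s

/-- `utilde n` : number of pairs of partitions into distinct parts of total weight `n`. -/
noncomputable def utilde (n : ℕ) : ℕ :=
  Nat.card {p : Finset ℕ × Finset ℕ //
    StrictPartition p.1 ∧ StrictPartition p.2 ∧ p.1.sum id + p.2.sum id = n}

/-- `c n` : number of binary words of length `n` avoiding `x xᴿ x`. -/
noncomputable def c (n : ℕ) : ℕ := Nat.card {w : List Bool // w.length = n ∧ AvoidsP w}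

/-- The word `(01)^n`. -/
def w01 (n : ℕ) : List Bool := (List.replicate n [false, true]).flatten

/-- The word `(10)^n`. -/
def w10 (n : ℕ) : List Bool := (List.replicate n [true, false]).flatten

/-!
Cutting a binary word between the two letters of each square `aa` splits it into its maximal
alternating blocks; when the word avoids `000` and `111` these are exactly the blocks
`A_0 a_1`, `a_i A_i a_{i+1}`, `a_k A_k`, so `f(w)` is the list of their lengths.

A valley `n_{j-1} ≥ n_j ≤ n_{j+1}` is a block `y` whose neighbours are at least as long and
end, resp. start, with the end letters of `y`. An alternating word is determined by its length
and one end letter, so the left neighbour ends with `yᴿ`, the right one starts with `yᴿ`, and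
`yᴿ y yᴿ` occurs. Conversely, the block lengths of `x xᴿ x` are `L ++ Lᴿ ++ L` with `L` those
of `x`. A sequence without valleys decreases strictly after its first non-ascent, which rules
out the two equal adjacent pairs at the junctions; so `x xᴿ x` has a valley. Extending a word
only lengthens its outer blocks, so the valley survives in every word containing `x xᴿ x`.
-/

def HasValley (d : List ℕ) : Prop :=
  ∃ a b c, [a, b, c] <:+: d ∧ b ≤ a ∧ b ≤ c

lemma noValley_iff_not_hasValley {d : List ℕ} : NoValley d ↔ ¬ HasValley d := by
  simp only [NoValley, HasValley, List.infix_iff_getElem?, List.getD_eq_getElem?_getD]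
  constructor
  · rintro h ⟨a, b, c, ⟨k, hk, hget⟩, hba, hbc⟩
    have ha := hget 0 (by simp)
    have hb := hget 1 (by simp)
    have hc := hget 2 (by simp)
    simp only [List.length_cons, List.length_nil] at hk
    refine h (k + 1) (by omega) (by omega) ⟨?_, ?_⟩ <;>
      simp_all [show k + 1 - 1 = k by omega, show 1 + k = k + 1 by omega,
        show 2 + k = k + 1 + 1 by omega]
  · rintro h j hj hjd ⟨hge, hle⟩
    refine h ⟨d[j - 1], d[j], d[j + 1], ⟨j - 1, by simp; omega, fun i hi => ?_⟩, ?_, ?_⟩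
    · simp only [List.length_cons, List.length_nil] at hi
      interval_cases i <;> simp [show 1 + (j - 1) = j by omega, show 2 + (j - 1) = j + 1 by omega]
    · simpa [List.getElem?_eq_getElem, show j - 1 < d.length by omega,
        show j < d.length by omega] using hge
    · simpa [List.getElem?_eq_getElem, show j < d.length by omega, hjd] using hle

lemma HasValley.mono {d e : List ℕ} (h : HasValley d) (hde : d <:+: e) : HasValley e :=
  let ⟨a, b, c, hd, hba, hbc⟩ := h
  ⟨a, b, c, hd.trans hde, hba, hbc⟩

lemma HasValley.reverse {d : List ℕ} (h : HasValley d) : HasValley d.reverse := by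
  obtain ⟨a, b, c, hd, hba, hbc⟩ := h
  exact ⟨c, b, a, by simpa using List.reverse_infix.2 hd, hbc, hba⟩

lemma hasValley_reverse_iff {d : List ℕ} : HasValley d.reverse ↔ HasValley d :=
  ⟨fun h => by simpa using h.reverse, HasValley.reverse⟩

lemma HasValley.cons_of_le {x y : ℕ} {d : List ℕ} (h : HasValley (x :: d)) (hxy : x ≤ y) :
    HasValley (y :: d) := by
  obtain ⟨a, b, c, hd, hba, hbc⟩ := h
  rcases List.infix_cons_iff.1 hd with ⟨t, ht⟩ | hd
  · simp only [List.cons_append, List.cons.injEq] at ht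
    obtain ⟨rfl, rfl⟩ := ht
    exact ⟨y, b, c, (List.prefix_append _ t).isInfix, by omega, hbc⟩
  · exact ⟨a, b, c, hd.trans (List.suffix_cons _ _).isInfix, hba, hbc⟩

lemma pairwise_gt_of_not_hasValley {a b : ℕ} {d : List ℕ} (h : ¬ HasValley (a :: b :: d))
    (hba : b ≤ a) : (b :: d).Pairwise (· > ·) := by
  induction d generalizing a b with
  | nil => simp
  | cons c d ih =>
    have hcb : c < b := by
      by_contra! hbc
      exact h ⟨a, b, c, (List.prefix_append [a, b, c] d).isInfix, hba, hbc⟩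
    have htail := ih (fun hv => h (hv.mono (List.suffix_cons _ _).isInfix)) hcb.le
    exact List.pairwise_cons.2 ⟨fun x hx => by
      rcases List.mem_cons.1 hx with rfl | hx
      · exact hcb
      · exact lt_trans (List.rel_of_pairwise_cons htail hx) hcb, htail⟩

lemma hasValley_append_reverse_append {L : List ℕ} (hL : L ≠ []) :
    HasValley (L ++ L.reverse ++ L) := by
  obtain ⟨L', p, rfl⟩ := List.eq_nil_or_concat L |>.resolve_left hL
  by_contra h
  have hsplit : L' ++ [p] ++ (L' ++ [p]).reverse ++ (L' ++ [p]) =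
      L' ++ p :: p :: (L'.reverse ++ L' ++ [p]) := by simp
  rw [List.concat_eq_append, hsplit] at h
  have hdec := pairwise_gt_of_not_hasValley (fun hv => h (hv.mono (List.suffix_append _ _).isInfix))
    le_rfl
  exact lt_irrefl p (List.rel_of_pairwise_cons hdec (by simp))

lemma Alt.reverse {A : List Bool} (h : Alt A) : Alt A.reverse :=
  List.isChain_reverse.2 (h.imp fun _ _ hne => hne.symm)

lemma Alt.eq_of_head?_eq {u v : List Bool} (hu : Alt u) (hv : Alt v)
    (hlen : u.length = v.length) (hhead : u.head? = v.head?) : u = v := by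
  induction u generalizing v with
  | nil => exact (List.length_eq_zero_iff.1 hlen.symm).symm
  | cons a u ih =>
    rcases v with _ | ⟨b, v⟩
    · simp at hlen
    obtain rfl : a = b := by simpa using hhead
    replace hu : List.IsChain (· ≠ ·) (a :: u) := hu
    replace hv : List.IsChain (· ≠ ·) (a :: v) := hv
    rw [List.isChain_cons] at hu hv
    refine congrArg _ (ih hu.2 hv.2 (by simpa using hlen) ?_)
    have hne : ∀ c d : Bool, a ≠ c → a ≠ d → c = d := by cases a <;> decide
    rcases u with _ | ⟨c, u⟩ <;> rcases v with _ | ⟨d, v⟩ <;> simp at hlen ⊢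
    exact hne c d (hu.1 c rfl) (hv.1 d rfl)

lemma Alt.eq_of_getLast?_eq {u v : List Bool} (hu : Alt u) (hv : Alt v)
    (hlen : u.length = v.length) (hlast : u.getLast? = v.getLast?) : u = v :=
  List.reverse_injective <| hu.reverse.eq_of_head?_eq hv.reverse (by simpa)
    (by simpa using hlast)

def altBlocks (w : List Bool) : List (List Bool) := w.splitBy (· != ·)

def altBlockLengths (w : List Bool) : List ℕ := (altBlocks w).map List.length

lemma altBlocks_eq_iff {w : List Bool} {Bs : List (List Bool)} :
    altBlocks w = Bs ↔ w = Bs.flatten ∧ [] ∉ Bs ∧ (∀ B ∈ Bs, Alt B) ∧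
      Bs.IsChain (fun B C => B.getLast? = C.head?) := by
  have halt : ∀ B : List Bool, (B.IsChain fun x y => (x != y) = true) ↔ Alt B :=
    fun B => List.IsChain.iff fun x y => bne_iff_ne
  simp only [altBlocks, List.splitBy_eq_iff, halt]
  refine and_congr_right fun _ => and_congr_right fun hnil => and_congr_right fun _ =>
    List.IsChain.iff_of_mem_imp fun B C hB hC => ?_
  have hB : B ≠ [] := fun h => hnil (h ▸ hB)
  have hC : C ≠ [] := fun h => hnil (h ▸ hC)
  simp [hB, hC, List.getLast?_eq_some_getLast hB, List.head?_eq_some_head hC]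

lemma altBlocks_spec (w : List Bool) :
    w = (altBlocks w).flatten ∧ [] ∉ altBlocks w ∧ (∀ B ∈ altBlocks w, Alt B) ∧
      (altBlocks w).IsChain (fun B C => B.getLast? = C.head?) :=
  altBlocks_eq_iff.1 rfl

lemma altBlocks_reverse (w : List Bool) :
    altBlocks w.reverse = ((altBlocks w).map List.reverse).reverse := by
  obtain ⟨hw, hnil, halt, hchain⟩ := altBlocks_spec w
  refine altBlocks_eq_iff.2 ⟨by rw [← List.reverse_flatten, ← hw], ?_, ?_, ?_⟩
  · simpa using hnil
  · simp only [List.mem_reverse, List.mem_map, forall_exists_index, and_imp]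
    rintro _ B hB rfl
    exact (halt B hB).reverse
  · rw [List.isChain_reverse, List.isChain_map]
    exact hchain.imp fun B C h => by simp [h]

lemma altBlocks_append {u v : List Bool} (h : u.getLast? = v.head?) :
    altBlocks (u ++ v) = altBlocks u ++ altBlocks v :=
  List.splitBy_append fun x hx y hy => by
    rw [h] at hx
    simp [Option.mem_unique hx hy]

lemma altBlocks_of_alt {A : List Bool} (hA : Alt A) (hne : A ≠ []) : altBlocks A = [A] :=
  List.splitBy_of_isChain hne (hA.imp fun _ _ h => bne_iff_ne.2 h)

lemma altBlocks_cons_of_ne {a c : Bool} {y : List Bool} (hac : a ≠ c) :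
    ∃ B Bs, altBlocks (c :: y) = B :: Bs ∧ altBlocks (a :: c :: y) = (a :: B) :: Bs := by
  obtain ⟨hw, hnil, halt, hchain⟩ := altBlocks_spec (c :: y)
  have hne : altBlocks (c :: y) ≠ [] := List.splitBy_ne_nil.2 (List.cons_ne_nil c y)
  obtain ⟨B, Bs, hBs⟩ := List.ne_nil_iff_exists_cons.1 hne
  rw [hBs] at hw hnil halt hchain
  have hB : B ≠ [] := fun h => hnil (h ▸ List.mem_cons_self)
  have hhead : B.head? = some c := by
    have := congrArg List.head? hw
    simp only [List.head?_cons, List.flatten_cons, List.head?_append_of_ne_nil _ hB] at this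
    exact this.symm
  refine ⟨B, Bs, hBs, altBlocks_eq_iff.2 ⟨by simp [hw], ?_, ?_, ?_⟩⟩
  · simpa using List.not_mem_of_not_mem_cons hnil
  · simp only [List.mem_cons, forall_eq_or_imp]
    refine ⟨List.isChain_cons.2 ⟨by simpa [hhead] using hac, halt B List.mem_cons_self⟩,
      fun C hC => halt C (List.mem_cons_of_mem B hC)⟩
  · rw [List.isChain_cons] at hchain ⊢
    refine ⟨fun C hC => ?_, hchain.2⟩
    rw [← hchain.1 C hC, List.getLast?_cons, List.getLast?_eq_some_getLast hB]
    rfl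

lemma altBlockLengths_reverse (w : List Bool) :
    altBlockLengths w.reverse = (altBlockLengths w).reverse := by
  simp [altBlockLengths, altBlocks_reverse, List.map_reverse]

lemma altBlockLengths_of_alt {A : List Bool} (hA : Alt A) (hne : A ≠ []) :
    altBlockLengths A = [A.length] := by
  simp [altBlockLengths, altBlocks_of_alt hA hne]

lemma altBlockLengths_append {u v : List Bool} (h : u.getLast? = v.head?) :
    altBlockLengths (u ++ v) = altBlockLengths u ++ altBlockLengths v := by
  simp [altBlockLengths, altBlocks_append h]

lemma pos_of_mem_altBlockLengths {w : List Bool} {n : ℕ} (h : n ∈ altBlockLengths w) :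
    0 < n := by
  obtain ⟨B, hB, rfl⟩ := List.mem_map.1 h
  exact List.length_pos_iff.2 (List.ne_nil_of_mem_splitBy hB)

lemma HasValley.altBlockLengths_cons {y : List Bool} (a : Bool)
    (h : HasValley (altBlockLengths y)) :
    HasValley (altBlockLengths (a :: y)) := by
  rcases y with _ | ⟨c, y⟩
  · simp [altBlockLengths, altBlocks, HasValley] at h
  by_cases hac : a = c
  · subst hac
    rw [← List.singleton_append, altBlockLengths_append rfl,
      altBlockLengths_of_alt (List.isChain_singleton a) (List.cons_ne_nil a [])]
    exact h.mono (List.suffix_append _ _).isInfix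
  · obtain ⟨B, Bs, hy, hay⟩ := altBlocks_cons_of_ne (y := y) hac
    simp only [altBlockLengths, hy, hay, List.map_cons, List.length_cons] at h ⊢
    exact h.cons_of_le (Nat.le_succ _)

lemma HasValley.altBlockLengths_append_left {y : List Bool} (s : List Bool)
    (h : HasValley (altBlockLengths y)) : HasValley (altBlockLengths (s ++ y)) := by
  induction s with
  | nil => exact h
  | cons a s ih => exact ih.altBlockLengths_cons a

lemma HasValley.altBlockLengths_append_right {y : List Bool} (t : List Bool)
    (h : HasValley (altBlockLengths y)) : HasValley (altBlockLengths (y ++ t)) := by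
  have hrev : HasValley (altBlockLengths y.reverse) := by
    rw [altBlockLengths_reverse]
    exact h.reverse
  have := hrev.altBlockLengths_append_left t.reverse
  rwa [← List.reverse_append, altBlockLengths_reverse, hasValley_reverse_iff] at this

lemma HasValley.altBlockLengths_of_infix {y w : List Bool} (h : HasValley (altBlockLengths y))
    (hyw : y <:+: w) : HasValley (altBlockLengths w) := by
  obtain ⟨s, t, rfl⟩ := hyw
  exact (h.altBlockLengths_append_left s).altBlockLengths_append_right t

lemma hasValley_altBlockLengths_append_reverse_append {x : List Bool} (hx : x ≠ []) :
    HasValley (altBlockLengths (x ++ x.reverse ++ x)) := by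
  have hx' : x.reverse ≠ [] := by simpa using hx
  rw [altBlockLengths_append (by rw [List.getLast?_append_of_ne_nil _ hx', List.getLast?_reverse]),
    altBlockLengths_append (by rw [List.head?_reverse]), altBlockLengths_reverse]
  exact hasValley_append_reverse_append (by simpa [altBlockLengths, altBlocks] using hx)

lemma reverse_append_append_reverse_infix {B₁ B₂ B₃ : List Bool}
    (h₁ : Alt B₁) (h₂ : Alt B₂) (h₃ : Alt B₃)
    (hlen₁ : B₂.length ≤ B₁.length) (hlen₃ : B₂.length ≤ B₃.length)
    (hj₁ : B₁.getLast? = B₂.head?) (hj₂ : B₂.getLast? = B₃.head?) :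
    B₂.reverse ++ B₂ ++ B₂.reverse <:+: B₁ ++ B₂ ++ B₃ := by
  rcases eq_or_ne B₂ [] with rfl | hne
  · simp
  have hpos : 0 < B₂.length := List.length_pos_iff.2 hne
  have hsuf : B₁.drop (B₁.length - B₂.length) = B₂.reverse :=
    Alt.eq_of_getLast?_eq (h₁.drop _) h₂.reverse (by simp; omega)
      (by rw [List.getLast?_drop, if_neg (by omega), hj₁, List.getLast?_reverse])
  have hpre : B₃.take B₂.length = B₂.reverse :=
    Alt.eq_of_head?_eq (h₃.take _) h₂.reverse (by simp; omega)
      (by rw [List.head?_take, if_neg (by omega), ← hj₂, List.head?_reverse])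
  refine ⟨B₁.take (B₁.length - B₂.length), B₃.drop B₂.length, ?_⟩
  conv_rhs => rw [← List.take_append_drop (B₁.length - B₂.length) B₁,
    ← List.take_append_drop B₂.length B₃, hsuf, hpre]
  simp

lemma exists_pattern_of_hasValley {w : List Bool} (h : HasValley (altBlockLengths w)) :
    ∃ u : List Bool, u ≠ [] ∧ u ++ u.reverse ++ u <:+: w := by
  obtain ⟨a, b, c, hinf, hba, hbc⟩ := h
  obtain ⟨l, hl, hmap⟩ := List.infix_map_iff.1 hinf
  rcases l with _ | ⟨B₁, _ | ⟨B₂, _ | ⟨B₃, _ | _⟩⟩⟩ <;>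
    simp only [List.map_cons, List.map_nil, List.cons.injEq, reduceCtorEq, and_false,
      and_true] at hmap
  obtain ⟨rfl, rfl, rfl⟩ := hmap
  obtain ⟨hflat, hnil, halt, hchain⟩ := altBlocks_spec w
  have hmem : ∀ B ∈ [B₁, B₂, B₃], B ∈ altBlocks w := fun B hB => hl.subset hB
  have hj : B₁.getLast? = B₂.head? ∧ B₂.getLast? = B₃.head? := by
    simpa using hchain.infix hl
  refine ⟨B₂.reverse, by simpa using ne_of_mem_of_not_mem (hmem B₂ (by simp)) hnil, ?_⟩
  rw [List.reverse_reverse]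
  refine (reverse_append_append_reverse_infix (halt _ (hmem B₁ (by simp)))
    (halt _ (hmem B₂ (by simp))) (halt _ (hmem B₃ (by simp))) hba hbc hj.1 hj.2).trans ?_
  rw [hflat]
  simpa using hl.flatten

theorem avoidsP_iff_not_hasValley (w : List Bool) :
    AvoidsP w ↔ ¬ HasValley (altBlockLengths w) :=
  ⟨fun hw hv => hw (exists_pattern_of_hasValley hv),
    fun hv ⟨_, hx, hocc⟩ =>
      hv ((hasValley_altBlockLengths_append_reverse_append hx).altBlockLengths_of_infix hocc)⟩

lemma AvoidsCubes.infix {t w : List Bool} (hc : AvoidsCubes w) (h : t <:+: w) : AvoidsCubes t :=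
  ⟨fun h' => hc.1 (h'.trans h), fun h' => hc.2 (h'.trans h)⟩

lemma AvoidsCubes.reverse {w : List Bool} (hc : AvoidsCubes w) : AvoidsCubes w.reverse :=
  ⟨fun h => hc.1 (by simpa using List.reverse_infix.2 h),
    fun h => hc.2 (by simpa using List.reverse_infix.2 h)⟩

lemma AvoidsCubes.not_infix {w : List Bool} (hc : AvoidsCubes w) (b : Bool) :
    ¬ [b, b, b] <:+: w := by
  cases b
  exacts [hc.1, hc.2]

lemma Alt.cons_of_avoidsCubes {A : List Bool} {b : Bool} (hA : Alt A)
    (hc : AvoidsCubes (b :: b :: A)) : Alt (b :: A) := by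
  rcases A with _ | ⟨a, A⟩
  · exact List.isChain_singleton b
  refine List.isChain_cons_cons.2 ⟨?_, hA⟩
  rintro rfl
  exact hc.not_infix b (List.prefix_append [b, b, b] A).isInfix

lemma Alt.append_of_avoidsCubes {A : List Bool} {b : Bool} (hA : Alt A)
    (hc : AvoidsCubes (A ++ [b, b])) : Alt (A ++ [b]) := by
  simpa using (hA.reverse.cons_of_avoidsCubes (b := b) (by simpa using hc.reverse)).reverse

lemma altBlockLengths_cons_glue_eq_seqMid (bs : List Bool) (b : Bool) (As : List (List Bool))
    (hlen : As.length = bs.length + 1) (halt : ∀ A ∈ As, Alt A)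
    (hc : AvoidsCubes (b :: b :: glue As bs)) : altBlockLengths (b :: glue As bs) = seqMid As := by
  induction bs generalizing b As with
  | nil =>
    obtain ⟨A, rfl⟩ := List.length_eq_one_iff.1 hlen
    have hA : Alt (b :: A) := (halt A (by simp)).cons_of_avoidsCubes hc
    simp [glue, seqMid, altBlockLengths_of_alt hA (List.cons_ne_nil b A)]
  | cons b' bs ih =>
    rcases As with _ | ⟨A, _ | ⟨A', As⟩⟩
    all_goals simp only [List.length_cons, List.length_nil] at hlen
    · omega
    · omega
    have hglue : b :: glue (A :: A' :: As) (b' :: bs) =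
        (b :: A ++ [b']) ++ (b' :: glue (A' :: As) bs) := by simp [glue]
    rw [hglue] at hc ⊢
    have hblock : Alt (b :: A ++ [b']) := by
      refine Alt.cons_of_avoidsCubes ((halt A (by simp)).append_of_avoidsCubes
        (hc.infix ⟨[b, b], glue (A' :: As) bs, by simp⟩))
        (hc.infix ⟨[], b' :: glue (A' :: As) bs, by simp⟩)
    rw [altBlockLengths_append (by rw [List.getLast?_concat]; rfl),
      altBlockLengths_of_alt hblock (List.cons_ne_nil _ _),
      ih b' (A' :: As) (by simpa using hlen) (fun B hB => halt B (by simp_all))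
        (hc.infix ⟨[b, b] ++ A, [], by simp⟩)]
    simp [seqMid]

lemma seqOf_eq_altBlockLengths {As : List (List Bool)} {bs w : List Bool} (hf : IsFact As bs w)
    (hc : AvoidsCubes w) : seqOf As = altBlockLengths w := by
  obtain ⟨hlen, halt, rfl⟩ := hf
  rcases bs with _ | ⟨b, bs⟩
  · obtain ⟨A, rfl⟩ := List.length_eq_one_iff.1 hlen
    rcases eq_or_ne A [] with rfl | hA
    · rfl
    simp [seqOf, glue, hA, altBlockLengths_of_alt (halt A (by simp)) hA]
  rcases As with _ | ⟨A, _ | ⟨A', As⟩⟩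
  all_goals simp only [List.length_cons, List.length_nil] at hlen
  · omega
  · omega
  have hglue : glue (A :: A' :: As) (b :: bs) = (A ++ [b]) ++ (b :: glue (A' :: As) bs) := by
    simp [glue]
  rw [hglue] at hc ⊢
  have hblock : Alt (A ++ [b]) :=
    (halt A (by simp)).append_of_avoidsCubes (hc.infix ⟨[], glue (A' :: As) bs, by simp⟩)
  rw [altBlockLengths_append (by simp), altBlockLengths_of_alt hblock (by simp),
    altBlockLengths_cons_glue_eq_seqMid bs b (A' :: As) (by simpa using hlen)
      (fun B hB => halt B (by simp_all)) (hc.infix ⟨A, [], by simp⟩)]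
  simp [seqOf]

/-- A binary word avoiding `000` and `111` avoids `x xᴿ x` iff its associated sequence
belongs to `X`. -/
theorem stmt19 (w : List Bool) (hc : AvoidsCubes w)
    (As : List (List Bool)) (bs : List Bool) (hf : IsFact As bs w) :
    AvoidsP w ↔ InX (seqOf As) := by
  rw [seqOf_eq_altBlockLengths hf hc, avoidsP_iff_not_hasValley, InX, noValley_iff_not_hasValley]
  exact ⟨fun h => ⟨fun _ => pos_of_mem_altBlockLengths, h⟩, And.right⟩
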